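/- There exists a unique mould pal with pal(∅) = 1 satisfying dur(pal) = mu(pal, dupal), where dupal is the mould with dupal(∅) = 0 and dupal(u_1,…,u_r) = (B_r/r!) · (1/(u_1⋯u_r)) · Σ_{j=0}^{r−1} (−1)^j · binom(r−1, j) · u_{j+1} for r ≥ 1, B_r denoting the r-th Bernoulli number (with the convention B_1 = −1/2). -/
import Mathlib


/-!
For this statement, moulds are modelled faithfully as families
`P = (P_r)_{r ≥ 0}` with `P_r` an element of the field `ℚ(u_1, …, u_r)` of
rational functions in `r` variables (the fraction field of `ℚ[u_1,…,u_r]`).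
-/

noncomputable section

/-- The field `ℚ(u_1,…,u_r)` of rational functions in `r` variables. -/
abbrev RF (r : ℕ) : Type := FractionRing (MvPolynomial (Fin r) ℚ)

/-- A mould: for each depth `r`, a rational function of `r` variables. -/
abbrev MouldF : Type := (r : ℕ) → RF r

/-- The embedding `ℚ(u_1,…,u_s) → ℚ(u_1,…,u_r)` induced by an injection of the
variables. -/
def embF {s r : ℕ} (f : Fin s ↪ Fin r) : RF s →+* RF r :=
  IsFractionRing.lift
    (g := (algebraMap (MvPolynomial (Fin r) ℚ) (RF r)).comp
      (MvPolynomial.rename (f : Fin s → Fin r)).toRingHom)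
    (by
      rw [RingHom.coe_comp]
      exact (IsFractionRing.injective (MvPolynomial (Fin r) ℚ) (RF r)).comp
        (MvPolynomial.rename_injective _ f.injective))

/-- The variables `u_1,…,u_i` inside `ℚ(u_1,…,u_r)`. -/
def takeEmbF (i r : ℕ) (h : i ≤ r) : Fin i ↪ Fin r := Fin.castLEEmb h

/-- The variables `u_{i+1},…,u_r` inside `ℚ(u_1,…,u_r)`. -/
def dropEmbF (i r : ℕ) : Fin (r - i) ↪ Fin r :=
  ⟨fun j => ⟨i + j.1, by have := j.2; omega⟩, by
    intro a b hab
    have h : i + a.1 = i + b.1 := congrArg Fin.val hab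
    exact Fin.ext (by omega)⟩

/-- Mould multiplication:
`mu(P,Q)(u_1,…,u_r) = Σ_{i=0}^{r} P(u_1,…,u_i) Q(u_{i+1},…,u_r)`. -/
def muF (P Q : MouldF) : MouldF := fun r =>
  ∑ i : Fin (r + 1),
    embF (takeEmbF i.1 r (by have := i.2; omega)) (P i.1)
      * embF (dropEmbF i.1 r) (Q (r - i.1))

/-- The operator `dur`: multiplication by `u_1 + ⋯ + u_r` in depth `r`. -/
def durF (P : MouldF) : MouldF := fun r =>
  algebraMap (MvPolynomial (Fin r) ℚ) (RF r) (∑ j, MvPolynomial.X j) * P r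

/-- The mould `dupal`, with `dupal(∅) = 0` and
`dupal(u_1,…,u_r) = (B_r/r!) (1/(u_1⋯u_r)) Σ_{j=0}^{r−1} (−1)^j binom(r−1,j) u_{j+1}`
for `r ≥ 1`, where `B_r` is the `r`-th Bernoulli number (convention `B_1 = −1/2`). -/
def dupalF : MouldF := fun r =>
  if r = 0 then 0
  else
    algebraMap (MvPolynomial (Fin r) ℚ) (RF r)
        (MvPolynomial.C (bernoulli r / (r.factorial : ℚ)))
      * (algebraMap (MvPolynomial (Fin r) ℚ) (RF r) (∏ j, MvPolynomial.X j))⁻¹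
      * algebraMap (MvPolynomial (Fin r) ℚ) (RF r)
          (∑ j : Fin r,
            MvPolynomial.C ((-1 : ℚ) ^ j.1 * ((r - 1).choose j.1 : ℚ)) * MvPolynomial.X j)

-- auxiliary definitions

def SvF (r : ℕ) : RF r := algebraMap (MvPolynomial (Fin r) ℚ) (RF r) (∑ j, MvPolynomial.X j)

lemma SvF_ne_zero (r : ℕ) (hr : r ≠ 0) : SvF r ≠ 0 := by
  have hp : (∑ j : Fin r, MvPolynomial.X j : MvPolynomial (Fin r) ℚ) ≠ 0 := by
    intro h
    have := congrArg (MvPolynomial.eval (fun _ => (1:ℚ))) h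
    simp at this
    omega
  unfold SvF
  rw [Ne, IsFractionRing.to_map_eq_zero_iff]
  exact hp

def rhsF (P : MouldF) (r : ℕ) : RF (r + 1) :=
  ∑ i : Fin (r + 1),
    embF (takeEmbF i.1 (r+1) (by have := i.2; omega)) (P i.1)
      * embF (dropEmbF i.1 (r+1)) (dupalF (r + 1 - i.1))

lemma rhsF_congr (P Q : MouldF) (r : ℕ) (h : ∀ i ≤ r, P i = Q i) :
    rhsF P r = rhsF Q r := by
  unfold rhsF
  refine Finset.sum_congr rfl fun i _ => ?_
  rw [h i.1 (by have := i.2; omega)]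

lemma muF_dupal_succ (P : MouldF) (r : ℕ) : muF P dupalF (r + 1) = rhsF P r := by
  unfold muF rhsF
  rw [Fin.sum_univ_castSucc]
  have h0 : dupalF (r + 1 - (Fin.last (r+1)).1) = 0 := by simp [dupalF]
  rw [h0, map_zero, mul_zero, add_zero]
  rfl

lemma durF_zero (P : MouldF) : durF P 0 = muF P dupalF 0 := by
  simp [durF, muF, dupalF]

def palF : (r : ℕ) → RF r
  | 0 => 1
  | (r+1) => (SvF (r+1))⁻¹ *
      ∑ i : Fin (r + 1),
        embF (takeEmbF i.1 (r+1) (by have := i.2; omega)) (palF i.1)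
          * embF (dropEmbF i.1 (r+1)) (dupalF (r + 1 - i.1))
  decreasing_by exact i.2

lemma palF_zero : palF 0 = 1 := by rw [palF]

lemma palF_succ (r : ℕ) : palF (r+1) = (SvF (r+1))⁻¹ * rhsF palF r := by
  rw [palF]; rfl

lemma durF_palF (r : ℕ) : durF palF r = muF palF dupalF r := by
  cases r with
  | zero => exact durF_zero _
  | succ r =>
    rw [muF_dupal_succ]
    show SvF (r+1) * palF (r+1) = rhsF palF r
    rw [palF_succ, ← mul_assoc, mul_inv_cancel₀ (SvF_ne_zero _ (by omega)), one_mul]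

/-- There exists a unique mould `pal` with `pal(∅) = 1`
satisfying `dur(pal) = mu(pal, dupal)`. -/
theorem pal_existsUnique :
    ∃! pal : MouldF, pal 0 = 1 ∧ ∀ r : ℕ, durF pal r = muF pal dupalF r := by
  refine ⟨palF, ⟨palF_zero, durF_palF⟩, ?_⟩
  rintro P ⟨h0, hP⟩
  funext r
  induction r using Nat.strong_induction_on with
  | _ r ih =>
    cases r with
    | zero => exact h0.trans palF_zero.symm
    | succ r =>
      have hS := SvF_ne_zero (r+1) (by omega)
      have h1 : SvF (r+1) * P (r+1) = rhsF P r := by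
        rw [← muF_dupal_succ]; exact hP (r+1)
      have h2 : rhsF P r = rhsF palF r :=
        rhsF_congr _ _ _ fun i hi => ih i (by omega)
      have h3 : SvF (r+1) * palF (r+1) = rhsF palF r := by
        have := durF_palF (r+1)
        rw [muF_dupal_succ] at this
        exact this
      have := h1.trans (h2.trans h3.symm)
      exact mul_left_cancel₀ hS this

end
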